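/- arXiv:2311.07342 — 6 statements merged into one kernel-verified Lean document; each statement's English description precedes it below -/
import Mathlib

section
/- Let λ₁, λ₂ ∈ (0,1) and let A be a 2×2 real matrix with det A = λ₁λ₂ and trace A = (1+λ₁)(1+λ₂)k - (λ₁+λ₂) for some real k ≥ 0 with k ≠ 1. Then A has no eigenvalue equal to 1 or -1. Moreover, if k > 1 then A has a real eigenvalue μ with μ > 1, and if 0 ≤ k < 1 then every (complex) eigenvalue of A has modulus strictly less than 1. -/
/-! With `χ(x) = x² - T x + D`, the hypotheses give `D = λ₁λ₂ ∈ (0,1)`,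
`χ(1) = (1+λ₁)(1+λ₂)(1-k)` and `χ(-1) = (1+λ₁)(1+λ₂)k + (1-λ₁)(1-λ₂) > 0`.
So `χ(±1) ≠ 0`. If `k > 1` then `χ(1) < 0` and, `χ` being monic, it has a real root
beyond `1`. If `k < 1` then `χ(1), χ(-1) > 0` and `D < 1`, which is the Schur–Cohn (Jury)
criterion: a non-real root `z` has `‖z‖² = z z̄ = D < 1`, and real roots `r₁, r₂` lie
on the same side of `1` and of `-1` with `r₁ r₂ < 1`, hence in `(-1, 1)`. -/

lemma exists_root_gt_one_of_one_sub_add_neg {T D : ℝ} (h : 1 - T + D < 0) :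
    ∃ μ : ℝ, 1 < μ ∧ μ ^ 2 - T * μ + D = 0 := by
  have hdisc : 0 < T ^ 2 - 4 * D := by nlinarith [sq_nonneg (T - 2)]
  set s := √(T ^ 2 - 4 * D)
  have hs2 : s ^ 2 = T ^ 2 - 4 * D := Real.sq_sqrt hdisc.le
  have hs0 : 0 < s := Real.sqrt_pos.mpr hdisc
  refine ⟨(T + s) / 2, ?_, by linear_combination hs2 / 4⟩
  -- `s² - (2 - T)² = -4 (1 - T + D) > 0`, so `s > 2 - T`
  rcases le_or_gt (2 - T) 0 with hT | hT
  · linarith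
  · nlinarith

lemma abs_lt_one_of_root {T D r : ℝ} (hD : D < 1) (h₁ : 0 < 1 - T + D)
    (hm₁ : 0 < 1 + T + D) (hr : r ^ 2 - T * r + D = 0) : |r| < 1 := by
  rw [abs_lt]
  constructor <;> nlinarith [sq_nonneg (r + 1), sq_nonneg (r - 1)]

lemma exists_real_root_or_normSq_eq {T D : ℝ} {z : ℂ} (hz : z ^ 2 - T * z + D = 0) :
    (∃ r : ℝ, z = r ∧ r ^ 2 - T * r + D = 0) ∨ Complex.normSq z = D := by
  have hz' : (starRingEnd ℂ) z ^ 2 - T * (starRingEnd ℂ) z + D = 0 := by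
    simpa using congrArg (starRingEnd ℂ) hz
  have hfac : ((starRingEnd ℂ) z - z) * ((starRingEnd ℂ) z + z - T) = 0 := by
    linear_combination hz' - hz
  rcases mul_eq_zero.mp hfac with hreal | hsum
  · have hzr : z = (z.re : ℂ) :=
      (Complex.conj_eq_iff_re.mp (sub_eq_zero.mp hreal)).symm
    refine Or.inl ⟨z.re, hzr, ?_⟩
    exact_mod_cast (show ((z.re ^ 2 - T * z.re + D : ℝ) : ℂ) = 0 by
      push_cast; rw [← hzr]; exact hz)
  · right
    exact_mod_cast (show (Complex.normSq z : ℂ) = D by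
      rw [← Complex.mul_conj]; linear_combination -hz + z * hsum)

lemma norm_lt_one_of_root {T D : ℝ} (hD : D < 1) (h₁ : 0 < 1 - T + D)
    (hm₁ : 0 < 1 + T + D) {z : ℂ} (hz : z ^ 2 - T * z + D = 0) : ‖z‖ < 1 := by
  rcases exists_real_root_or_normSq_eq hz with ⟨r, rfl, hr⟩ | hnormSq
  · rw [Complex.norm_real, Real.norm_eq_abs]
    exact abs_lt_one_of_root hD h₁ hm₁ hr
  · have hsq : ‖z‖ ^ 2 < 1 := by rw [Complex.sq_norm, hnormSq]; exact hD
    nlinarith [norm_nonneg z]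

lemma ofReal_sq_sub_mul_add_ne_zero {T D x : ℝ} (h : x ^ 2 - T * x + D ≠ 0) :
    (x : ℂ) ^ 2 - (T : ℂ) * x + (D : ℂ) ≠ 0 := by
  exact_mod_cast h

/-- eigenvalue constraints for a 2×2 real matrix with given
determinant and trace. Eigenvalues are complex roots of
χ(x) = x² - (trace A)·x + det A. -/
theorem stmt_0 (l₁ l₂ k : ℝ) (A : Matrix (Fin 2) (Fin 2) ℝ)
    (hl₁ : l₁ ∈ Set.Ioo (0:ℝ) 1) (hl₂ : l₂ ∈ Set.Ioo (0:ℝ) 1)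
    (hk : 0 ≤ k) (hk1 : k ≠ 1)
    (hdet : A.det = l₁ * l₂)
    (htr : A.trace = (1 + l₁) * (1 + l₂) * k - (l₁ + l₂)) :
    ((1:ℂ)^2 - (A.trace : ℂ) * 1 + (A.det : ℂ) ≠ 0) ∧
    ((-1:ℂ)^2 - (A.trace : ℂ) * (-1) + (A.det : ℂ) ≠ 0) ∧
    (1 < k → ∃ μ : ℝ, 1 < μ ∧ μ^2 - A.trace * μ + A.det = 0) ∧
    (k < 1 → ∀ z : ℂ, z^2 - (A.trace : ℂ) * z + (A.det : ℂ) = 0 →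
      ‖z‖ < 1) := by
  obtain ⟨hl₁0, hl₁1⟩ := hl₁
  obtain ⟨hl₂0, hl₂1⟩ := hl₂
  have hD : A.det < 1 := by rw [hdet]; nlinarith
  have hc : 0 < (1 + l₁) * (1 + l₂) := by positivity
  have hχ₁ : 1 ^ 2 - A.trace * 1 + A.det = (1 + l₁) * (1 + l₂) * (1 - k) := by
    rw [hdet, htr]; ring
  have hχm₁ : 0 < (-1) ^ 2 - A.trace * (-1) + A.det := by
    have hpos : 0 < (1 + l₁) * (1 + l₂) * k + (1 - l₁) * (1 - l₂) := by
      have : 0 < (1 - l₁) * (1 - l₂) := mul_pos (by linarith) (by linarith)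
      positivity
    rw [hdet, htr]; linarith
  refine ⟨?_, ?_, fun hk' => ?_, fun hk' z hz => ?_⟩
  · simpa using ofReal_sq_sub_mul_add_ne_zero (x := 1)
      (hχ₁ ▸ mul_ne_zero hc.ne' (sub_ne_zero.mpr hk1.symm))
  · simpa using ofReal_sq_sub_mul_add_ne_zero (x := -1) hχm₁.ne'
  · have hχ₁neg := mul_neg_of_pos_of_neg hc (sub_neg.mpr hk')
    exact exists_root_gt_one_of_one_sub_add_neg (by linarith)
  · have hχ₁pos := mul_pos hc (sub_pos.mpr hk')
    exact norm_lt_one_of_root hD (by linarith) (by linarith) hz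
end

section
/- Let λ ∈ (0,1) and k ∈ (0,1). If the polynomial χ(x) = x² - ((1+λ)²k - 2λ)x + λ² has complex (non-real) roots, then both roots have modulus exactly λ. If χ has real roots μ₁ ≤ μ₂, then λ² < μ₁ ≤ μ₂ < 1. In either case all roots have modulus strictly less than 1. -/
/-! A non-real root of a real quadratic z² - bz + l² is paired with its conjugate, so its
squared modulus is the product of the roots, l². For a real root μ the equation gives
(μ - 1)(μ - l²) = (b - 1 - l²) μ, and b - 1 - l² = -(1 + l)²(1 - k) < 0; as μ > 0
(because b > -2l), μ lies strictly between l² and 1. -/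

lemma norm_eq_of_quadratic_root_of_im_ne_zero {b c : ℝ} {z : ℂ} (hc : 0 ≤ c)
    (hz : z ^ 2 - (b : ℂ) * z + ((c ^ 2 : ℝ) : ℂ) = 0) (him : z.im ≠ 0) : ‖z‖ = c := by
  have hre := congrArg Complex.re hz
  have him' := congrArg Complex.im hz
  simp only [pow_two, Complex.sub_re, Complex.add_re, Complex.mul_re, Complex.ofReal_re,
    Complex.ofReal_im, Complex.sub_im, Complex.add_im, Complex.mul_im, Complex.zero_re,
    Complex.zero_im] at hre him'
  have hb : b = 2 * z.re := by
    have : z.im * (2 * z.re - b) = 0 := by linear_combination him'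
    linarith [(mul_eq_zero.1 this).resolve_left him]
  have hsq : ‖z‖ ^ 2 = c ^ 2 := by
    rw [Complex.sq_norm, Complex.normSq_apply]
    linear_combination -hre - z.re * hb
  exact (pow_left_inj₀ (norm_nonneg z) hc two_ne_zero).1 hsq

lemma mem_Ioo_of_quadratic_root {b c μ : ℝ} (hc₀ : 0 < c) (hc₁ : c < 1) (hb₀ : -2 * c < b)
    (hb₁ : b < 1 + c ^ 2) (hμ : μ ^ 2 - b * μ + c ^ 2 = 0) : c ^ 2 < μ ∧ μ < 1 := by
  have hμ₀ : 0 < μ := by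
    by_contra! h
    rcases h.lt_or_eq with hneg | rfl
    · nlinarith [sq_nonneg (μ + c), mul_pos (by linarith : 0 < b + 2 * c) (neg_pos.2 hneg)]
    · nlinarith
  have hprod : (μ - 1) * (μ - c ^ 2) < 0 := by
    have : (μ - 1) * (μ - c ^ 2) = (b - 1 - c ^ 2) * μ := by linear_combination hμ
    rw [this]
    exact mul_neg_of_neg_of_pos (by linarith) hμ₀
  have hc2 : c ^ 2 < 1 := by nlinarith
  rcases mul_neg_iff.1 hprod with ⟨h₁, h₂⟩ | ⟨h₁, h₂⟩
  · exfalso; linarith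
  · constructor <;> linarith

/-- for λ ∈ (0,1) and k ∈ (0,1), non-real roots of
x² - ((1+λ)²k - 2λ)x + λ² have modulus λ, real roots lie in (λ², 1),
and in any case all roots have modulus < 1. -/
theorem stmt_4 (l k : ℝ) (hl : l ∈ Set.Ioo (0:ℝ) 1) (hk : k ∈ Set.Ioo (0:ℝ) 1) :
    (∀ z : ℂ, z^2 - (((1 + l)^2 * k - 2 * l : ℝ) : ℂ) * z + ((l^2 : ℝ) : ℂ) = 0 →
      z.im ≠ 0 → ‖z‖ = l) ∧
    (∀ μ₁ μ₂ : ℝ,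
      μ₁^2 - ((1 + l)^2 * k - 2 * l) * μ₁ + l^2 = 0 →
      μ₂^2 - ((1 + l)^2 * k - 2 * l) * μ₂ + l^2 = 0 →
      μ₁ ≤ μ₂ → l^2 < μ₁ ∧ μ₂ < 1) ∧
    (∀ z : ℂ, z^2 - (((1 + l)^2 * k - 2 * l : ℝ) : ℂ) * z + ((l^2 : ℝ) : ℂ) = 0 →
      ‖z‖ < 1) := by
  obtain ⟨hl₀, hl₁⟩ := hl
  obtain ⟨hk₀, hk₁⟩ := hk
  have hsq_pos : 0 < (1 + l) ^ 2 := by positivity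
  have hb₀ : -2 * l < (1 + l) ^ 2 * k - 2 * l := by nlinarith
  have hb₁ : (1 + l) ^ 2 * k - 2 * l < 1 + l ^ 2 := by nlinarith
  have real_root := fun μ (hμ : μ ^ 2 - ((1 + l) ^ 2 * k - 2 * l) * μ + l ^ 2 = 0) =>
    mem_Ioo_of_quadratic_root hl₀ hl₁ hb₀ hb₁ hμ
  refine ⟨fun z hz him => norm_eq_of_quadratic_root_of_im_ne_zero hl₀.le hz him,
    fun μ₁ μ₂ h₁ h₂ _ => ⟨(real_root μ₁ h₁).1, (real_root μ₂ h₂).2⟩,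
    fun z hz => ?_⟩
  rcases eq_or_ne z.im 0 with him | him
  · have hre := congrArg Complex.re hz
    simp only [pow_two, Complex.sub_re, Complex.add_re, Complex.mul_re, Complex.ofReal_re,
      Complex.ofReal_im, him, Complex.zero_re] at hre
    obtain ⟨hlo, hhi⟩ := real_root z.re (by linear_combination hre)
    rw [← Complex.re_add_im z, him, Complex.ofReal_zero, zero_mul, add_zero, Complex.norm_real,
      Real.norm_of_nonneg ((sq_nonneg l).trans hlo.le)]
    exact hhi
  · exact (norm_eq_of_quadratic_root_of_im_ne_zero hl₀.le hz him).trans_lt hl₁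
end

section
/- Let λ ∈ (0,1) and k ≤ -1. Then the polynomial χ(x) = x² - ((1+λ)²k - 2λ)x + λ² has two real roots μ₁, μ₂ satisfying μ₂ < -1 < -λ² < μ₁ < 0. -/
/-- for λ ∈ (0,1) and k ≤ -1, the quadratic
x² - ((1+λ)²k - 2λ)x + λ² has two real roots with μ₂ < -1 < -λ² < μ₁ < 0. -/
theorem stmt_6 (l k : ℝ) (hl : l ∈ Set.Ioo (0:ℝ) 1) (hk : k ≤ -1) :
    ∃ μ₁ μ₂ : ℝ,
      μ₁^2 - ((1 + l)^2 * k - 2 * l) * μ₁ + l^2 = 0 ∧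
      μ₂^2 - ((1 + l)^2 * k - 2 * l) * μ₂ + l^2 = 0 ∧
      μ₂ < -1 ∧ (-1 : ℝ) < -l^2 ∧ -l^2 < μ₁ ∧ μ₁ < 0 := by
  obtain ⟨hl0, hl1⟩ := hl
  set b : ℝ := (1 + l)^2 * k - 2 * l with hb
  have hble : b ≤ -(1 + l)^2 - 2 * l := by
    have h1 : (0:ℝ) < (1 + l)^2 := by positivity
    nlinarith
  have hdisc : 0 < b^2 - 4 * l^2 := by nlinarith
  set d : ℝ := Real.sqrt (b^2 - 4 * l^2) with hdd
  have hd0 : 0 < d := Real.sqrt_pos.mpr hdisc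
  have hd2 : d^2 = b^2 - 4 * l^2 := Real.sq_sqrt hdisc.le
  refine ⟨(b + d)/2, (b - d)/2, by nlinarith, by nlinarith, ?_, by nlinarith, ?_, ?_⟩
  · -- (b - d)/2 < -1 ⟺ b + 2 < d; since 1 + b + l² < 0, d² - (b+2)² = -4(1+b+l²) > 0
    have h1 : 1 + b + l^2 < 0 := by nlinarith
    nlinarith [sq_nonneg (d - (b + 2)), sq_nonneg (d + (b + 2))]
  · -- -l² < (b + d)/2 ⟺ d > -b - 2l² ; d² - (b+2l²)² = -4l²(l²+b+1) > 0
    have h1 : 1 + b + l^2 < 0 := by nlinarith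
    nlinarith [sq_nonneg (d + (b + 2*l^2)), sq_nonneg (d - (b + 2*l^2)), mul_pos hl0 hl0]
  · -- (b+d)/2 < 0 : d² < b², d < -b
    nlinarith [sq_nonneg (d + b)]
end

section
/- Let λ ∈ (0,1) and k ∈ (-1,0), and set λ̄ := (1 - √(-k))/(1 + √(-k)). Then λ̄ ∈ (0,1), and: for λ ∈ (0, λ̄) the roots μ₁, μ₂ of χ(x) = x² - ((1+λ)²k - 2λ)x + λ² satisfy -1 < μ₂ < -λ < μ₁ < 0; for λ = λ̄ the roots are -λ² and -1; and for λ ∈ (λ̄, 1) they satisfy μ₂ < -1 < -λ² < μ₁ < 0. -/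
/-- Auxiliary: real roots of the quadratic with sum and product info. -/
lemma stmt_7_aux (l k : ℝ) (hl0 : 0 < l) (hl1 : l < 1) (hk0 : -1 < k) (hk1 : k < 0) :
    ∃ μ₁ μ₂ : ℝ,
      μ₁^2 - ((1 + l)^2 * k - 2 * l) * μ₁ + l^2 = 0 ∧
      μ₂^2 - ((1 + l)^2 * k - 2 * l) * μ₂ + l^2 = 0 ∧
      μ₂ < μ₁ ∧ μ₁ < 0 ∧ μ₁ + μ₂ = (1 + l)^2 * k - 2 * l ∧ μ₁ * μ₂ = l^2 := by
  obtain ⟨B, hB⟩ : ∃ B : ℝ, B = (1 + l)^2 * k - 2 * l := ⟨_, rfl⟩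
  have h1l : (0:ℝ) < 1 + l := by linarith
  have hk2 : (1 + l)^2 * k < 0 := mul_neg_of_pos_of_neg (by positivity) hk1
  have h1 : B + 2 * l < 0 := by rw [hB]; linarith
  have h2 : B - 2 * l < 0 := by linarith
  have hBneg : B < 0 := by linarith
  have hD : 0 < B^2 - 4 * l^2 := by nlinarith [mul_pos_of_neg_of_neg h1 h2]
  obtain ⟨s, hsdef⟩ : ∃ s : ℝ, s = Real.sqrt (B^2 - 4 * l^2) := ⟨_, rfl⟩
  have hs2 : s^2 = B^2 - 4 * l^2 := by rw [hsdef]; exact Real.sq_sqrt hD.le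
  have hs : 0 < s := by rw [hsdef]; exact Real.sqrt_pos.mpr hD
  refine ⟨(B + s) / 2, (B - s) / 2, ?_, ?_, by linarith, ?_, by rw [← hB]; ring, ?_⟩
  · rw [← hB]; linear_combination (1/4 : ℝ) * hs2
  · rw [← hB]; linear_combination (1/4 : ℝ) * hs2
  · nlinarith [hs2, hs, hBneg, mul_pos hl0 hl0]
  · linear_combination (-(1/4) : ℝ) * hs2


lemma stmt_7_between (a μ₁ μ₂ : ℝ) (h : (a - μ₁) * (a - μ₂) < 0) (hlt : μ₂ < μ₁) :
    μ₂ < a ∧ a < μ₁ := by constructor <;> nlinarith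

lemma stmt_7_outside (a μ₁ μ₂ : ℝ) (h : 0 < (a - μ₁) * (a - μ₂)) (ha : a < μ₁) :
    a < μ₂ := by nlinarith

/-- bifurcation for k ∈ (-1,0), with threshold
λ̄ = (1-√(-k))/(1+√(-k)): sink for λ < λ̄, parabolic (roots -λ², -1) at λ = λ̄,
saddle for λ > λ̄. -/
theorem stmt_7 (l k : ℝ) (hl : l ∈ Set.Ioo (0:ℝ) 1) (hk : k ∈ Set.Ioo (-1:ℝ) 0) :
    (1 - Real.sqrt (-k)) / (1 + Real.sqrt (-k)) ∈ Set.Ioo (0:ℝ) 1 ∧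
    (l ∈ Set.Ioo (0:ℝ) ((1 - Real.sqrt (-k)) / (1 + Real.sqrt (-k))) →
      ∃ μ₁ μ₂ : ℝ,
        μ₁^2 - ((1 + l)^2 * k - 2 * l) * μ₁ + l^2 = 0 ∧
        μ₂^2 - ((1 + l)^2 * k - 2 * l) * μ₂ + l^2 = 0 ∧
        -1 < μ₂ ∧ μ₂ < -l ∧ -l < μ₁ ∧ μ₁ < 0) ∧
    (l = (1 - Real.sqrt (-k)) / (1 + Real.sqrt (-k)) →
      ∀ x : ℝ, x^2 - ((1 + l)^2 * k - 2 * l) * x + l^2 = 0 ↔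
        (x = -l^2 ∨ x = -1)) ∧
    (l ∈ Set.Ioo ((1 - Real.sqrt (-k)) / (1 + Real.sqrt (-k))) 1 →
      ∃ μ₁ μ₂ : ℝ,
        μ₁^2 - ((1 + l)^2 * k - 2 * l) * μ₁ + l^2 = 0 ∧
        μ₂^2 - ((1 + l)^2 * k - 2 * l) * μ₂ + l^2 = 0 ∧
        μ₂ < -1 ∧ (-1:ℝ) < -l^2 ∧ -l^2 < μ₁ ∧ μ₁ < 0) := by
  obtain ⟨hl0, hl1⟩ := hl
  obtain ⟨hk0, hk1⟩ := hk
  have hknn : (0:ℝ) ≤ -k := by linarith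
  obtain ⟨r, hrdef⟩ : ∃ r : ℝ, r = Real.sqrt (-k) := ⟨_, rfl⟩
  rw [← hrdef]
  have hr2 : r^2 = -k := by rw [hrdef]; exact Real.sq_sqrt hknn
  have hrpos : 0 < r := by rw [hrdef]; exact Real.sqrt_pos.mpr (by linarith)
  have hrlt1 : r < 1 := by nlinarith
  have h1r : 0 < 1 + r := by linarith
  have h1l : (0:ℝ) < 1 + l := by linarith
  obtain ⟨μ₁, μ₂, he1, he2, hlt, hneg, hsum, hprod⟩ :=
    stmt_7_aux l k hl0 hl1 hk0 hk1
  have hfl : (-l - μ₁) * (-l - μ₂) = l * ((1 + l)^2 * k) := by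
    linear_combination l * hsum + hprod
  have hf1 : (-1 - μ₁) * (-1 - μ₂) = (1 - l)^2 + (1 + l)^2 * k := by
    linear_combination hsum + hprod
  have hfl2 : (-l^2 - μ₁) * (-l^2 - μ₂) = l^2 * ((1 - l)^2 + (1 + l)^2 * k) := by
    linear_combination l^2 * hsum + hprod
  have hplneg : (-l - μ₁) * (-l - μ₂) < 0 := by
    rw [hfl]
    exact mul_neg_of_pos_of_neg hl0 (mul_neg_of_pos_of_neg (by positivity) hk1)
  obtain ⟨hm2l, hm1l⟩ := stmt_7_between (-l) μ₁ μ₂ hplneg hlt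
  refine ⟨⟨div_pos (by linarith) h1r, (div_lt_one h1r).mpr (by linarith)⟩, ?_, ?_, ?_⟩
  · rintro ⟨-, hlam⟩
    have h : l * (1 + r) < 1 - r := (lt_div_iff₀ h1r).mp hlam
    have h' : r * (1 + l) < 1 - l := by linarith
    have hrl : 0 < r * (1 + l) := mul_pos hrpos h1l
    have hab : 0 < (1 - l - r * (1 + l)) * (1 - l + r * (1 + l)) :=
      mul_pos (by linarith) (by linarith)
    have hid : (1 - l - r * (1 + l)) * (1 - l + r * (1 + l))
        = (1 - l)^2 + (1 + l)^2 * k := by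
      linear_combination -(1 + l)^2 * hr2
    have hkey : 0 < (1 - l)^2 + (1 + l)^2 * k := hid ▸ hab
    refine ⟨μ₁, μ₂, he1, he2, ?_, hm2l, hm1l, hneg⟩
    exact stmt_7_outside (-1) μ₁ μ₂ (by rw [hf1]; exact hkey) (by linarith)
  · intro hlam x
    have h : l * (1 + r) = 1 - r := by
      rw [hlam]; field_simp
    have hr1l : r * (1 + l) = 1 - l := by linarith
    have hkey : (1 - l)^2 = (1 + l)^2 * (-k) := by
      linear_combination (-(r * (1 + l)) - (1 - l)) * hr1l + (1 + l)^2 * hr2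
    have hB : (1 + l)^2 * k - 2 * l = -(1 + l^2) := by linear_combination hkey
    rw [hB]
    constructor
    · intro hx
      have hx' : (x + 1) * (x + l^2) = 0 := by linear_combination hx
      rcases mul_eq_zero.mp hx' with h' | h'
      · right; linarith
      · left; linarith
    · rintro (h' | h') <;> subst h' <;> ring
  · rintro ⟨hlam, -⟩
    have h : 1 - r < l * (1 + r) := (div_lt_iff₀ h1r).mp hlam
    have h' : 1 - l < r * (1 + l) := by linarith
    have hab : (1 - l - r * (1 + l)) * (1 - l + r * (1 + l)) < 0 :=
      mul_neg_of_neg_of_pos (by linarith) (by nlinarith [mul_pos hrpos h1l])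
    have hid : (1 - l - r * (1 + l)) * (1 - l + r * (1 + l))
        = (1 - l)^2 + (1 + l)^2 * k := by
      linear_combination -(1 + l)^2 * hr2
    have hkey : (1 - l)^2 + (1 + l)^2 * k < 0 := hid ▸ hab
    have hp1 : (-1 - μ₁) * (-1 - μ₂) < 0 := by rw [hf1]; exact hkey
    have hp2 : (-l^2 - μ₁) * (-l^2 - μ₂) < 0 := by
      rw [hfl2]; exact mul_neg_of_pos_of_neg (by positivity) hkey
    obtain ⟨hb1, -⟩ := stmt_7_between (-1) μ₁ μ₂ hp1 hlt
    obtain ⟨-, hb2⟩ := stmt_7_between (-l^2) μ₁ μ₂ hp2 hlt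
    exact ⟨μ₁, μ₂, he1, he2, hb1, by nlinarith, hb2, hneg⟩
end

section
/- Let λ₁, λ₂ ∈ (0,1) and 0 ≤ k < 1. Then the real quadratic polynomial χ(x) = x² - ((1+λ₁)(1+λ₂)k - (λ₁+λ₂))x + λ₁λ₂ is strictly positive on [1, ∞). Consequently, every complex root of χ has modulus strictly less than 1. -/
/-!
Write `χ(x) = x² - b x + c` with `b = (1+λ₁)(1+λ₂)k - (λ₁+λ₂)` and `c = λ₁λ₂`. Then
`χ(1) = (1+λ₁)(1+λ₂)(1-k) > 0`, `χ(-1) = (1-λ₁)(1-λ₂) + (1+λ₁)(1+λ₂)k > 0`, `c < 1` and the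
vertex `b/2` lies left of `1`, so `χ > 0` on `[1, ∞)`. A non-real root `z` comes with its
conjugate, so `|z|² = c < 1`; two real roots `x, y` have `(1-x)(1-y) = χ(1) > 0`,
`(1+x)(1+y) = χ(-1) > 0` and `xy = c < 1`, which forces both into `(-1, 1)`.
-/

namespace Quadratic

variable {b c : ℝ}

theorem pos_of_one_le (hb : b ≤ 2) (h₁ : 0 < 1 - b + c) {x : ℝ} (hx : 1 ≤ x) :
    0 < x ^ 2 - b * x + c := by
  have hx' : 0 ≤ x - 1 := sub_nonneg.2 hx
  have : x ^ 2 - b * x + c = (x - 1) ^ 2 + (2 - b) * (x - 1) + (1 - b + c) := by ring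
  rw [this]
  nlinarith [mul_nonneg (sub_nonneg.2 hb) hx']

theorem abs_lt_one_of_root (hc : c < 1) (h₁ : 0 < 1 - b + c) (hneg₁ : 0 < 1 + b + c) {x : ℝ}
    (hx : x ^ 2 - b * x + c = 0) : |x| < 1 := by
  set y := b - x
  have hprod : x * y = c := by linear_combination -hx
  have hright : 0 < (1 - x) * (1 - y) := by linear_combination h₁ + hx
  have hleft : 0 < (1 + x) * (1 + y) := by linear_combination hneg₁ + hx
  refine abs_lt.2 ⟨?_, ?_⟩
  · by_contra! h
    have : y < -1 := by nlinarith
    nlinarith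
  · by_contra! h
    have : 1 < y := by nlinarith
    nlinarith

theorem normSq_eq_of_root {z : ℂ} (hz : z ^ 2 - b * z + c = 0) (him : z.im ≠ 0) :
    Complex.normSq z = c := by
  have hre := congrArg Complex.re hz
  have hIm := congrArg Complex.im hz
  simp only [sq, Complex.sub_re, Complex.add_re, Complex.mul_re, Complex.ofReal_re,
    Complex.ofReal_im, Complex.sub_im, Complex.add_im, Complex.mul_im, Complex.zero_re,
    Complex.zero_im] at hre hIm
  have hb : b = 2 * z.re := by
    have : z.im * (2 * z.re - b) = 0 := by linear_combination hIm
    linarith [(mul_eq_zero.1 this).resolve_left him]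
  rw [Complex.normSq_apply]
  subst hb
  linear_combination -hre

theorem norm_lt_one_of_root (hc : c < 1) (h₁ : 0 < 1 - b + c) (hneg₁ : 0 < 1 + b + c) {z : ℂ}
    (hz : z ^ 2 - b * z + c = 0) : ‖z‖ < 1 := by
  by_cases him : z.im = 0
  · have hzre : z = z.re := Complex.ext rfl (by simpa using him)
    rw [hzre] at hz ⊢
    rw [Complex.norm_real, Real.norm_eq_abs]
    exact abs_lt_one_of_root hc h₁ hneg₁ (by exact_mod_cast hz)
  · have : ‖z‖ ^ 2 < 1 := by
      rw [Complex.sq_norm, normSq_eq_of_root hz him]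
      exact hc
    nlinarith [norm_nonneg z]

end Quadratic

/-- for λ₁, λ₂ ∈ (0,1) and 0 ≤ k < 1, the quadratic
χ(x) = x² - ((1+λ₁)(1+λ₂)k - (λ₁+λ₂))x + λ₁λ₂ is positive on [1, ∞),
and every complex root of χ has modulus < 1. -/
theorem stmt_9 (l₁ l₂ k : ℝ) (hl₁ : l₁ ∈ Set.Ioo (0:ℝ) 1)
    (hl₂ : l₂ ∈ Set.Ioo (0:ℝ) 1) (hk : 0 ≤ k) (hk1 : k < 1) :
    (∀ x : ℝ, 1 ≤ x →
      0 < x^2 - ((1 + l₁) * (1 + l₂) * k - (l₁ + l₂)) * x + l₁ * l₂) ∧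
    (∀ z : ℂ,
      z^2 - (((1 + l₁) * (1 + l₂) * k - (l₁ + l₂) : ℝ) : ℂ) * z
        + ((l₁ * l₂ : ℝ) : ℂ) = 0 → ‖z‖ < 1) := by
  obtain ⟨hl₁0, hl₁1⟩ := hl₁
  obtain ⟨hl₂0, hl₂1⟩ := hl₂
  have hprod : 0 < (1 + l₁) * (1 + l₂) := by positivity
  have hc : l₁ * l₂ < 1 := by nlinarith
  have hb : (1 + l₁) * (1 + l₂) * k - (l₁ + l₂) ≤ 2 := by nlinarith
  have h₁ : 0 < 1 - ((1 + l₁) * (1 + l₂) * k - (l₁ + l₂)) + l₁ * l₂ := by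
    have : 0 < (1 + l₁) * (1 + l₂) * (1 - k) := mul_pos hprod (sub_pos.2 hk1)
    linear_combination this
  have hneg₁ : 0 < 1 + ((1 + l₁) * (1 + l₂) * k - (l₁ + l₂)) + l₁ * l₂ := by
    have : 0 < (1 - l₁) * (1 - l₂) + (1 + l₁) * (1 + l₂) * k := by
      have := mul_pos (sub_pos.2 hl₁1) (sub_pos.2 hl₂1)
      positivity
    linear_combination this
  exact ⟨fun x hx => Quadratic.pos_of_one_le hb h₁ hx,
    fun z hz => Quadratic.norm_lt_one_of_root hc h₁ hneg₁ hz⟩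
end

section
/- Let X be a metric space, f : X → X continuous, and L : X → ℝ a continuous function with L(f(x)) ≤ L(x) for all x. If X is compact and x ∈ X, then the ω-limit set of x under f is contained in the neutral set N(L) = {y ∈ X : L(f(y)) = L(y)}. -/
/-!
Along an orbit the values `L (f^[n] x)` decrease, and along the subsequence `φ` they converge to
`L y`; a monotone sequence with a convergent subsequence converges, so `L (f^[n] x) → L y`. The
shifted subsequence `f^[φ n + 1] x = f (f^[φ n] x)` tends to `f y`, so the same limit is also
`L (f y)`.
-/

open Filter Topology

theorem antitone_iterate_of_apply_le {X : Type*} {f : X → X} {L : X → ℝ}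
    (hLyap : ∀ x, L (f x) ≤ L x) (x : X) : Antitone fun n => L (f^[n] x) :=
  antitone_nat_of_succ_le fun n => by
    simpa only [Function.iterate_succ_apply'] using hLyap (f^[n] x)

theorem tendsto_apply_iterate_of_tendsto_subseq {X : Type*} [TopologicalSpace X] {f : X → X}
    {L : X → ℝ} (hL : Continuous L) (hLyap : ∀ x, L (f x) ≤ L x) {x y : X} {φ : ℕ → ℕ}
    (hφ : Tendsto φ atTop atTop) (hy : Tendsto (fun n => f^[φ n] x) atTop (𝓝 y)) :
    Tendsto (fun n => L (f^[n] x)) atTop (𝓝 (L y)) :=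
  (tendsto_iff_tendsto_subseq_of_antitone (antitone_iterate_of_apply_le hLyap x) hφ).mpr
    ((hL.tendsto y).comp hy)

theorem stmt_13_general (X : Type*) [MetricSpace X]
    (f : X → X) (hf : Continuous f)
    (L : X → ℝ) (hL : Continuous L) (hLyap : ∀ x, L (f x) ≤ L x)
    (x y : X) (φ : ℕ → ℕ) (hφ : StrictMono φ)
    (hy : Tendsto (fun n => f^[φ n] x) atTop (𝓝 y)) :
    L (f y) = L y := by
  have hlim := tendsto_apply_iterate_of_tendsto_subseq hL hLyap hφ.tendsto_atTop hy
  have h_shift_to_Ly : Tendsto (fun n => L (f^[φ n + 1] x)) atTop (𝓝 (L y)) :=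
    hlim.comp ((tendsto_add_atTop_nat 1).comp hφ.tendsto_atTop)
  have h_shift_to_Lfy : Tendsto (fun n => L (f^[φ n + 1] x)) atTop (𝓝 (L (f y))) := by
    simpa only [Function.iterate_succ_apply', Function.comp_def] using
      (hL.tendsto (f y)).comp ((hf.tendsto y).comp hy)
  exact tendsto_nhds_unique h_shift_to_Lfy h_shift_to_Ly

/-- for a continuous map f of a compact metric space with a
continuous Lyapunov function L, the ω-limit set of any point is contained in
the neutral set {y : L(f(y)) = L(y)}. -/
theorem stmt_13 (X : Type*) [MetricSpace X] [CompactSpace X]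
    (f : X → X) (hf : Continuous f)
    (L : X → ℝ) (hL : Continuous L) (hLyap : ∀ x, L (f x) ≤ L x)
    (x y : X) (φ : ℕ → ℕ) (hφ : StrictMono φ)
    (hy : Tendsto (fun n => f^[φ n] x) atTop (𝓝 y)) :
    L (f y) = L y :=
  stmt_13_general X f hf L hL hLyap x y φ hφ hy
end
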